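/- Let G be a graph and let t, t' be exchangeable tubes of G, with T, T' adjacent maximal tubings satisfying T \ {t} = T' \ {t'}. Then t ∪ t' is a tube belonging to both T and T', every connected component of the induced subgraph on t ∩ t' is a tube belonging to both T and T', and the characteristic vectors satisfy χ(t) + χ(t') = χ(t ∪ t') + Σ_{s ∈ cc(t ∩ t')} χ(s). -/

import Mathlib

open scoped Classical

variable {V : Type*} [Fintype V] [DecidableEq V]

/-- A tube of `G`: a nonempty vertex subset inducing a connected subgraph. -/
def IsTube (G : SimpleGraph V) (t : Finset V) : Prop :=
  t.Nonempty ∧ (G.induce (t : Set V)).Connected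

/-- The set of all tubes of `G`. -/
noncomputable def tubes (G : SimpleGraph V) : Finset (Finset V) :=
  Finset.univ.powerset.filter (fun t => IsTube G t)

/-- Compatibility of tubes: nested, or disjoint with non-tube union. -/
def Compatible (G : SimpleGraph V) (t t' : Finset V) : Prop :=
  t ⊆ t' ∨ t' ⊆ t ∨ (t ∩ t' = ∅ ∧ ¬ IsTube G (t ∪ t'))

/-- A tubing on `G`: pairwise compatible tubes containing all connected components
(that is, all inclusion-maximal tubes). -/
def IsTubing (G : SimpleGraph V) (T : Finset (Finset V)) : Prop :=
  (∀ t ∈ T, IsTube G t) ∧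
  (∀ t ∈ T, ∀ t' ∈ T, Compatible G t t') ∧
  (∀ K : Finset V, IsTube G K → (∀ t : Finset V, IsTube G t → K ⊆ t → K = t) → K ∈ T)

/-- A maximal tubing on `G`. -/
def IsMaxTubing (G : SimpleGraph V) (T : Finset (Finset V)) : Prop :=
  IsTubing G T ∧ ∀ T', IsTubing G T' → T ⊆ T' → T = T'

/-- Two tubes are exchangeable if two maximal tubings differ exactly by them. -/
def ExchangeableT (G : SimpleGraph V) (t t' : Finset V) : Prop :=
  t ≠ t' ∧ ∃ T T', IsMaxTubing G T ∧ IsMaxTubing G T' ∧ t ∈ T ∧ t' ∈ T' ∧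
    T.erase t = T'.erase t'

/-- `u` is a neighbor of the vertex set `s`: `u ∉ s` and `u` is adjacent to some vertex of `s`. -/
def NbrOf (G : SimpleGraph V) (s : Finset V) (u : V) : Prop :=
  u ∉ s ∧ ∃ x ∈ s, G.Adj u x

/-- Connected components of the induced subgraph on `U`:
inclusion-maximal tubes contained in `U`. -/
noncomputable def gccSet (G : SimpleGraph V) (U : Finset V) : Finset (Finset V) :=
  (tubes G).filter (fun K => K ⊆ U ∧ ∀ C : Finset V, IsTube G C → C ⊆ U → K ⊆ C → K = C)

/-- Characteristic vector of a subset of `V` in `ℝ^V`. -/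
def chi (S : Finset V) : V → ℝ := fun v => if v ∈ S then 1 else 0

/-- `w` is a non-disconnecting vertex of the set `s`. -/
def NonDisc (G : SimpleGraph V) (s : Finset V) (w : V) : Prop :=
  w ∈ s ∧ (s.erase w = ∅ ∨ IsTube G (s.erase w))

/-!
Since `T` and `T'` agree outside `t` and `t'`, the tube `t'` is compatible with every tube of
`T` other than `t`; it does not lie in `T`, so by maximality `t` and `t'` are incompatible, which
forces `t ∪ t'` to be a tube. A tube compatible with both `t` and `t'` is compatible with
`t ∪ t'` and with every component of `t ∩ t'`, so maximality of `T` (and symmetrically of `T'`)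
puts these tubes into both tubings. The vector identity is
`χ(t) + χ(t') = χ(t ∪ t') + χ(t ∩ t')` together with the fact that the components of a set
partition it.
-/

section Tubes

variable {G : SimpleGraph V} {s s' t a b K : Finset V}

omit [Fintype V] [DecidableEq V] in
lemma isTube_singleton (v : V) : IsTube G {v} := by
  refine ⟨Finset.singleton_nonempty v, ?_⟩
  rw [Finset.coe_singleton, SimpleGraph.induce_singleton_eq_top]
  exact SimpleGraph.connected_top

omit [Fintype V]

lemma IsTube.union_of_inter_nonempty (hs : IsTube G s) (hs' : IsTube G s')
    (h : (s ∩ s').Nonempty) : IsTube G (s ∪ s') := by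
  obtain ⟨x, hx⟩ := h
  refine ⟨hs.1.mono Finset.subset_union_left, ?_⟩
  rw [Finset.coe_union]
  exact SimpleGraph.induce_union_connected hs.2.preconnected hs'.2.preconnected
    ⟨x, by simpa using hx⟩

lemma IsTube.union_of_adj (hs : IsTube G s) (hs' : IsTube G s') {x y : V} (hx : x ∈ s)
    (hy : y ∈ s') (hxy : G.Adj x y) : IsTube G (s ∪ s') := by
  refine ⟨hs.1.mono Finset.subset_union_left, ?_⟩
  rw [Finset.coe_union]
  exact SimpleGraph.connected_induce_union hs.2.preconnected hs'.2.preconnected hx hy hxy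

lemma exists_adj_of_isTube_union (hs : s.Nonempty) (hs' : s'.Nonempty) (hd : s ∩ s' = ∅)
    (h : IsTube G (s ∪ s')) : ∃ x ∈ s, ∃ y ∈ s', G.Adj x y := by
  obtain ⟨x, hx⟩ := hs
  obtain ⟨y, hy⟩ := hs'
  have hys : y ∉ s := Finset.disjoint_right.1 (Finset.disjoint_iff_inter_eq_empty.2 hd) hy
  obtain ⟨p⟩ := h.2.preconnected ⟨x, by simp [hx]⟩ ⟨y, by simp [hy]⟩
  obtain ⟨d, -, hd_fst, hd_snd⟩ := p.exists_boundary_dart {z | (z : V) ∈ s} hx hys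
  have hmem : (d.snd : V) ∈ s ∪ s' := by exact_mod_cast d.snd.2
  exact ⟨d.fst, hd_fst, d.snd, (Finset.mem_union.1 hmem).resolve_left hd_snd, d.adj⟩

lemma IsTube.union_of_subset (hs : IsTube G s) (ha : a.Nonempty) (has : a ⊆ s)
    (hab : IsTube G (a ∪ b)) : IsTube G (s ∪ b) := by
  have h : s ∪ b = s ∪ (a ∪ b) := by rw [← Finset.union_assoc, Finset.union_eq_left.2 has]
  rw [h]
  exact hs.union_of_inter_nonempty hab
    (ha.mono (Finset.subset_inter has Finset.subset_union_left))

lemma isTube_union_of_not_compatible (ha : IsTube G a) (hb : IsTube G b)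
    (h : ¬ Compatible G a b) : IsTube G (a ∪ b) := by
  rcases (a ∩ b).eq_empty_or_nonempty with hd | hd
  · by_contra hu
    exact h (Or.inr (Or.inr ⟨hd, hu⟩))
  · exact ha.union_of_inter_nonempty hb hd

lemma Compatible.symm (h : Compatible G a b) : Compatible G b a := by
  rcases h with h | h | ⟨hd, hu⟩
  · exact Or.inr (Or.inl h)
  · exact Or.inl h
  · exact Or.inr (Or.inr ⟨by rwa [Finset.inter_comm], by rwa [Finset.union_comm]⟩)

lemma compatible_of_separated_of_subset (hs : IsTube G s) (ht : IsTube G t) (hK : IsTube G K)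
    (hKt : K ⊆ t) (hd : s ∩ t = ∅) (hu : ¬ IsTube G (s ∪ t)) : Compatible G s K := by
  have hdK : s ∩ K = ∅ :=
    Finset.subset_empty.1 (hd ▸ Finset.inter_subset_inter_left hKt)
  refine Or.inr (Or.inr ⟨hdK, fun hsK => hu ?_⟩)
  obtain ⟨x, hx, y, hy, hxy⟩ := exists_adj_of_isTube_union hs.1 hK.1 hdK hsK
  exact hs.union_of_adj ht hx (hKt hy) hxy

lemma Compatible.union_right (hs : IsTube G s) (ha : IsTube G a) (hb : IsTube G b)
    (hab : IsTube G (a ∪ b)) (h₁ : Compatible G s a) (h₂ : Compatible G s b) :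
    Compatible G s (a ∪ b) := by
  rcases h₁ with hsa | has | ⟨hda, hna⟩
  · exact Or.inl (hsa.trans Finset.subset_union_left)
  all_goals rcases h₂ with hsb | hbs | ⟨hdb, hnb⟩
  · exact Or.inl (hsb.trans Finset.subset_union_right)
  · exact Or.inr (Or.inl (Finset.union_subset has hbs))
  · exact (hnb (hs.union_of_subset ha.1 has hab)).elim
  · exact Or.inl (hsb.trans Finset.subset_union_right)
  · exact (hna (hs.union_of_subset hb.1 hbs (Finset.union_comm a b ▸ hab))).elim
  · refine Or.inr (Or.inr ⟨by rw [Finset.inter_union_distrib_left, hda, hdb,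
      Finset.union_empty], fun hu => ?_⟩)
    obtain ⟨x, hx, y, hy, hxy⟩ := exists_adj_of_isTube_union hs.1 hab.1
      (by rw [Finset.inter_union_distrib_left, hda, hdb, Finset.union_empty]) hu
    rcases Finset.mem_union.1 hy with hy | hy
    · exact hna (hs.union_of_adj ha hx hy hxy)
    · exact hnb (hs.union_of_adj hb hx hy hxy)

end Tubes

section Components

variable {G : SimpleGraph V} {U K K' s : Finset V}

lemma mem_gccSet_iff : K ∈ gccSet G U ↔
    IsTube G K ∧ K ⊆ U ∧ ∀ C : Finset V, IsTube G C → C ⊆ U → K ⊆ C → K = C := by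
  simp [gccSet, tubes]

lemma exists_mem_gccSet_superset (hK : IsTube G K) (hKU : K ⊆ U) :
    ∃ C ∈ gccSet G U, K ⊆ C := by
  obtain ⟨C, hKC, ⟨hC, hCU⟩, hCmax⟩ :=
    Set.Finite.exists_le_maximal (s := {C : Finset V | IsTube G C ∧ C ⊆ U}) (Set.toFinite _)
      ⟨hK, hKU⟩
  exact ⟨C, mem_gccSet_iff.2 ⟨hC, hCU, fun D hD hDU hCD =>
    le_antisymm hCD (hCmax ⟨hD, hDU⟩ hCD)⟩, hKC⟩

lemma subset_of_mem_gccSet_of_isTube_union (hK : K ∈ gccSet G U) (hsU : s ⊆ U)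
    (hu : IsTube G (K ∪ s)) : s ⊆ K := by
  obtain ⟨-, hKU, hKmax⟩ := mem_gccSet_iff.1 hK
  rw [hKmax _ hu (Finset.union_subset hKU hsU) Finset.subset_union_left]
  exact Finset.subset_union_right

lemma eq_of_mem_gccSet_of_inter_nonempty (hK : K ∈ gccSet G U) (hK' : K' ∈ gccSet G U)
    (h : (K ∩ K').Nonempty) : K = K' := by
  have hu := (mem_gccSet_iff.1 hK).1.union_of_inter_nonempty (mem_gccSet_iff.1 hK').1 h
  refine le_antisymm (subset_of_mem_gccSet_of_isTube_union hK' (mem_gccSet_iff.1 hK).2.1 ?_)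
    (subset_of_mem_gccSet_of_isTube_union hK (mem_gccSet_iff.1 hK').2.1 hu)
  rwa [Finset.union_comm]

lemma compatible_of_mem_gccSet (hK : K ∈ gccSet G U) (hs : IsTube G s) (hsU : s ⊆ U) :
    Compatible G K s := by
  by_cases hu : IsTube G (K ∪ s)
  · exact Or.inr (Or.inl (subset_of_mem_gccSet_of_isTube_union hK hsU hu))
  · refine Or.inr (Or.inr ⟨Finset.not_nonempty_iff_eq_empty.1 fun h => hu ?_, hu⟩)
    exact (mem_gccSet_iff.1 hK).1.union_of_inter_nonempty hs h

lemma Compatible.of_mem_gccSet_inter {a b : Finset V} (hs : IsTube G s) (ha : IsTube G a)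
    (hb : IsTube G b) (h₁ : Compatible G s a) (h₂ : Compatible G s b)
    (hK : K ∈ gccSet G (a ∩ b)) : Compatible G s K := by
  obtain ⟨hKt, hKab, -⟩ := mem_gccSet_iff.1 hK
  rcases h₁ with hsa | has | ⟨hda, hna⟩
  · rcases h₂ with hsb | hbs | ⟨hdb, hnb⟩
    · exact (compatible_of_mem_gccSet hK hs (Finset.subset_inter hsa hsb)).symm
    · exact Or.inr (Or.inl (hKab.trans (Finset.inter_subset_right.trans hbs)))
    · exact compatible_of_separated_of_subset hs hb hKt
        (hKab.trans Finset.inter_subset_right) hdb hnb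
  · exact Or.inr (Or.inl (hKab.trans (Finset.inter_subset_left.trans has)))
  · exact compatible_of_separated_of_subset hs ha hKt (hKab.trans Finset.inter_subset_left) hda hna

end Components

omit [Fintype V] in
lemma chi_add_chi (s t : Finset V) : chi s + chi t = chi (s ∪ t) + chi (s ∩ t) := by
  funext v
  by_cases hs : v ∈ s <;> by_cases ht : v ∈ t <;> simp [chi, hs, ht]

lemma sum_chi_gccSet (G : SimpleGraph V) (U : Finset V) :
    ∑ K ∈ gccSet G U, chi K = chi U := by
  funext v
  simp only [Finset.sum_apply, chi]
  by_cases hv : v ∈ U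
  · obtain ⟨K, hK, hvK⟩ :=
      exists_mem_gccSet_superset (isTube_singleton v) (Finset.singleton_subset_iff.2 hv)
    have hvK : v ∈ K := hvK (Finset.mem_singleton_self v)
    rw [Finset.sum_eq_single_of_mem K hK fun K' hK' hne => if_neg fun hvK' => hne
      (eq_of_mem_gccSet_of_inter_nonempty hK' hK ⟨v, Finset.mem_inter.2 ⟨hvK', hvK⟩⟩)]
    simp [hv, hvK]
  · rw [Finset.sum_eq_zero fun K hK => if_neg fun hvK => hv ((mem_gccSet_iff.1 hK).2.1 hvK)]
    simp [hv]

section Exchange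

variable {G : SimpleGraph V} {t t' x : Finset V} {T T' : Finset (Finset V)}

omit [Fintype V] in
lemma IsMaxTubing.mem_of_compatible (hT : IsMaxTubing G T) (hx : IsTube G x)
    (h : ∀ s ∈ T, Compatible G s x) : x ∈ T := by
  have hxT : IsTubing G (insert x T) := by
    refine ⟨fun s hs => ?_, fun a ha b hb => ?_, fun K hK hKmax =>
      Finset.mem_insert_of_mem (hT.1.2.2 K hK hKmax)⟩
    · rcases Finset.mem_insert.1 hs with rfl | hs
      exacts [hx, hT.1.1 s hs]
    · rcases Finset.mem_insert.1 ha with rfl | haT <;>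
        rcases Finset.mem_insert.1 hb with rfl | hbT
      exacts [Or.inl subset_rfl, (h b hbT).symm, h a haT, hT.1.2.1 a haT b hbT]
  rw [hT.2 _ hxT (Finset.subset_insert x T)]
  exact Finset.mem_insert_self x T

omit [Fintype V] in
lemma not_compatible_of_exchange (hT : IsMaxTubing G T) (hT' : IsMaxTubing G T')
    (ht' : t' ∈ T') (hne : t ≠ t') (hadj : T.erase t = T'.erase t') : ¬ Compatible G t t' := by
  intro hc
  have ht'T : t' ∈ T := hT.mem_of_compatible (hT'.1.1 t' ht') fun s hs => by
    by_cases hst : s = t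
    · exact hst ▸ hc
    · exact hT'.1.2.1 s (Finset.mem_of_mem_erase (hadj ▸ Finset.mem_erase.2 ⟨hst, hs⟩)) t' ht'
  have : t' ∈ T'.erase t' := hadj ▸ Finset.mem_erase.2 ⟨hne.symm, ht'T⟩
  simp at this

lemma union_mem_and_components_mem_of_exchange (hT : IsMaxTubing G T)
    (hT' : IsMaxTubing G T') (ht : t ∈ T) (ht' : t' ∈ T') (hne : t ≠ t')
    (hadj : T.erase t = T'.erase t') :
    t ∪ t' ∈ T ∧ ∀ K ∈ gccSet G (t ∩ t'), K ∈ T := by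
  have htube := hT.1.1 t ht
  have htube' := hT'.1.1 t' ht'
  have hU := isTube_union_of_not_compatible htube htube'
    (not_compatible_of_exchange hT hT' ht' hne hadj)
  have hcompat : ∀ s ∈ T, s ≠ t → Compatible G s t ∧ Compatible G s t' := fun s hs hst =>
    ⟨hT.1.2.1 s hs t ht,
      hT'.1.2.1 s (Finset.mem_of_mem_erase (hadj ▸ Finset.mem_erase.2 ⟨hst, hs⟩)) t' ht'⟩
  refine ⟨hT.mem_of_compatible hU fun s hs => ?_, fun K hK =>
    hT.mem_of_compatible (mem_gccSet_iff.1 hK).1 fun s hs => ?_⟩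
  · by_cases hst : s = t
    · exact Or.inl (hst ▸ Finset.subset_union_left)
    · obtain ⟨h₁, h₂⟩ := hcompat s hs hst
      exact h₁.union_right (hT.1.1 s hs) htube htube' hU h₂
  · by_cases hst : s = t
    · exact Or.inr (Or.inl (hst ▸ (mem_gccSet_iff.1 hK).2.1.trans Finset.inter_subset_left))
    · obtain ⟨h₁, h₂⟩ := hcompat s hs hst
      exact h₁.of_mem_gccSet_inter (hT.1.1 s hs) htube htube' h₂ hK

end Exchange

theorem stmt12 (G : SimpleGraph V) (t t' : Finset V)
    (T T' : Finset (Finset V)) (hT : IsMaxTubing G T) (hT' : IsMaxTubing G T')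
    (ht : t ∈ T) (ht' : t' ∈ T') (hne : t ≠ t') (hadj : T.erase t = T'.erase t') :
    IsTube G (t ∪ t') ∧ t ∪ t' ∈ T ∧ t ∪ t' ∈ T' ∧
    (∀ K ∈ gccSet G (t ∩ t'), K ∈ T ∧ K ∈ T') ∧
    chi t + chi t' = chi (t ∪ t') + ∑ K ∈ gccSet G (t ∩ t'), chi K := by
  obtain ⟨hUT, hKT⟩ := union_mem_and_components_mem_of_exchange hT hT' ht ht' hne hadj
  obtain ⟨hUT', hKT'⟩ :=
    union_mem_and_components_mem_of_exchange hT' hT ht' ht hne.symm hadj.symm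
  rw [Finset.union_comm] at hUT'
  rw [Finset.inter_comm] at hKT'
  refine ⟨hT.1.1 _ hUT, hUT, hUT', fun K hK => ⟨hKT K hK, hKT' K hK⟩, ?_⟩
  rw [sum_chi_gccSet, chi_add_chi]
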